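/- arXiv:1812.03159 — 3 statements merged into one kernel-verified Lean document; each statement's English description precedes it below -/
import Mathlib

section
/- The halved n-cube for even n has no cliques of size greater than n; in particular, for n even, any Delsarte clique of the halved n-cube (a clique of size 1 − k/θ_min where k = n(n−1)/2 is the degree and θ_min is the minimum adjacency eigenvalue) has size exactly n. -/
open Finset

/-- The hypercube graph on binary words indexed by `ι`. -/
def cube (ι : Type*) [Fintype ι] [DecidableEq ι] : SimpleGraph (ι → ZMod 2) where
  Adj x y := hammingDist x y = 1
  symm := ⟨fun x y h => by show hammingDist y x = 1; rw [hammingDist_comm]; exact h⟩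
  loopless := ⟨fun x h => by simp [hammingDist_self] at h⟩

instance (ι : Type*) [Fintype ι] [DecidableEq ι] : DecidableRel (cube ι).Adj :=
  fun x y => inferInstanceAs (Decidable (hammingDist x y = 1))

/-- The halved hypercube: even-weight words, adjacent iff Hamming distance 2. -/
def halvedCube (ι : Type*) [Fintype ι] [DecidableEq ι] :
    SimpleGraph {x : ι → ZMod 2 // Even (hammingDist x 0)} where
  Adj x y := hammingDist x.1 y.1 = 2
  symm := ⟨fun x y h => by show hammingDist y.1 x.1 = 2; rw [hammingDist_comm]; exact h⟩
  loopless := ⟨fun x h => by simp [hammingDist_self] at h⟩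

instance (ι : Type*) [Fintype ι] [DecidableEq ι] : DecidableRel (halvedCube ι).Adj :=
  fun x y => inferInstanceAs (Decidable (hammingDist x.1 y.1 = 2))

variable {V : Type*} [Fintype V] [DecidableEq V]

/-- Number of neighbors of `v` in the set `C`. -/
def nbrCount (G : SimpleGraph V) [DecidableRel G.Adj] (v : V) (C : Finset V) : ℕ :=
  (C.filter (G.Adj v)).card

/-- `(C0, C1)` is an equitable 2-partition with quotient matrix `[[a,b],[c,d]]`. -/
def IsEquitable2 (G : SimpleGraph V) [DecidableRel G.Adj] (C0 C1 : Finset V)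
    (a b c d : ℕ) : Prop :=
  Disjoint C0 C1 ∧ C0 ∪ C1 = Finset.univ ∧
  (∀ v ∈ C0, nbrCount G v C0 = a ∧ nbrCount G v C1 = b) ∧
  (∀ v ∈ C1, nbrCount G v C0 = c ∧ nbrCount G v C1 = d)

/-- `C` is an equitable `k`-partition with quotient matrix `S`. -/
def IsEquitableK (G : SimpleGraph V) [DecidableRel G.Adj] {k : ℕ}
    (C : V → Fin k) (S : Fin k → Fin k → ℕ) : Prop :=
  ∀ (v : V) (j : Fin k),
    (Finset.univ.filter (fun w => G.Adj v w ∧ C w = j)).card = S (C v) j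

/-! If `x₀` lies in a clique of the halved `n`-cube, the supports of `y - x₀` for the other
members `y` are `2`-subsets of `Fin n` whose symmetric differences have size `2`, i.e. they
form an intersecting family. By Erdős–Ko–Rado there are at most `n - 1` of them once `n ≥ 4`
(for `n ≤ 2` there are at most `n - 1` two-subsets at all). For `n = 3` the bound fails: the
halved `3`-cube is `K₄`, which is where evenness of `n` enters. -/

open scoped symmDiff

lemma card_le_sub_one_of_intersecting_of_sized_two {n : ℕ} (hn : n ≠ 3)
    {F : Finset (Finset (Fin n))} (hF : (F : Set (Finset (Fin n))).Intersecting)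
    (hF₂ : (F : Set (Finset (Fin n))).Sized 2) : #F ≤ n - 1 := by
  rcases le_or_gt 4 n with h4 | h4
  · simpa using erdos_ko_rado hF hF₂ (by omega)
  · have hle := hF₂.card_le
    rw [Fintype.card_fin] at hle
    interval_cases n <;> simp_all

lemma filter_ne_injective {ι : Type*} [Fintype ι] (z : ι → ZMod 2) :
    Function.Injective fun x : ι → ZMod 2 => ({i | x i ≠ z i} : Finset ι) := by
  intro x y h
  funext i
  have hi := Finset.ext_iff.mp h i
  simp only [Finset.mem_filter, Finset.mem_univ, true_and] at hi
  revert hi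
  generalize x i = a; generalize y i = b; generalize z i = c
  decide +revert

lemma hammingDist_eq_card_symmDiff {ι : Type*} [Fintype ι] [DecidableEq ι]
    (x y z : ι → ZMod 2) :
    hammingDist x y = #(({i | x i ≠ z i} : Finset ι) ∆ ({i | y i ≠ z i} : Finset ι)) := by
  unfold hammingDist
  congr 1
  ext i
  simp only [Finset.mem_filter, Finset.mem_univ, true_and, Finset.mem_symmDiff]
  generalize x i = a; generalize y i = b; generalize z i = c
  decide +revert

lemma not_disjoint_of_card_symmDiff_eq_two {α : Type*} [DecidableEq α] {A B : Finset α}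
    (hA : #A = 2) (hB : #B = 2) (hAB : #(A ∆ B) = 2) : ¬Disjoint A B := by
  intro h
  rw [h.symmDiff_eq_sup, Finset.sup_eq_union, Finset.card_union_of_disjoint h, hA, hB] at hAB
  omega

theorem halvedCube_isClique_card_le {n : ℕ} (hn₀ : 0 < n) (hn₃ : n ≠ 3)
    {s : Finset {x : Fin n → ZMod 2 // Even (hammingDist x 0)}}
    (hs : (halvedCube (Fin n)).IsClique (s : Set _)) : #s ≤ n := by
  obtain rfl | ⟨x₀, hx₀⟩ := s.eq_empty_or_nonempty
  · exact Nat.zero_le _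
  let supp (y : {x : Fin n → ZMod 2 // Even (hammingDist x 0)}) : Finset (Fin n) :=
    {i | y.1 i ≠ x₀.1 i}
  let F := (s.erase x₀).image supp
  have hsupp_inj : Function.Injective supp :=
    (filter_ne_injective x₀.1).comp Subtype.val_injective
  have hdist : ∀ y ∈ s.erase x₀, ∀ z ∈ s.erase x₀, y ≠ z → #(supp y ∆ supp z) = 2 :=
    fun y hy z hz hyz => (hammingDist_eq_card_symmDiff y.1 z.1 x₀.1).symm.trans
      (hs (Finset.mem_of_mem_erase hy) (Finset.mem_of_mem_erase hz) hyz)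
  have hsized : (F : Set (Finset (Fin n))).Sized 2 := by
    intro A hA
    obtain ⟨y, hy, rfl⟩ := Finset.mem_image.mp hA
    exact hs (Finset.mem_of_mem_erase hy) hx₀ (Finset.ne_of_mem_erase hy)
  have hinter : (F : Set (Finset (Fin n))).Intersecting := by
    intro A hA B hB
    obtain ⟨y, hy, rfl⟩ := Finset.mem_image.mp hA
    obtain ⟨z, hz, rfl⟩ := Finset.mem_image.mp hB
    obtain rfl | hyz := eq_or_ne y z
    · rw [disjoint_self_iff_empty, ← Finset.card_eq_zero, hsized hA]
      omega
    · exact not_disjoint_of_card_symmDiff_eq_two (hsized hA) (hsized hB)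
        (hdist y hy z hz hyz)
  have hF := card_le_sub_one_of_intersecting_of_sized_two hn₃ hinter hsized
  rw [Finset.card_image_of_injective _ hsupp_inj, Finset.card_erase_of_mem hx₀] at hF
  omega

/-- for even `n > 0`, the halved `n`-cube has no clique of size
greater than `n`; and the Delsarte bound `1 - k/θ_min`, where `k = n(n-1)/2`
and `θ_min = -n/2`, equals `n`. In particular every Delsarte clique has size
exactly `n`. -/
theorem stmt3 (n : ℕ) (hn : Even n) (hpos : 0 < n) :
    (∀ s : Finset {x : Fin n → ZMod 2 // Even (hammingDist x 0)},
      (halvedCube (Fin n)).IsClique (s : Set _) → s.card ≤ n) ∧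
    (1 - ((n : ℝ) * (n - 1) / 2) / (-(n : ℝ) / 2) = n) := by
  refine ⟨fun s hs => halvedCube_isClique_card_le hpos ?_ hs, ?_⟩
  · rintro rfl
    exact (by decide : ¬Even 3) hn
  · have hn₀ : (n : ℝ) ≠ 0 := by positivity
    field_simp
    ring
end

section
/- If (C₀,…,C_{k−1}) is an equitable k-partition of the hypercube H(n) with quotient matrix S, then its restriction to the even-weight vertices is an equitable k-partition of the halved n-cube, provided each restricted cell is nonempty; the (i,j) entry of its quotient matrix counts, for a vertex v ∈ C_i of even weight, the even-weight vertices of C_j at Hamming distance 2 from v, and this count depends only on i and j. -/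
open Finset

variable {V : Type*} [Fintype V] [DecidableEq V]

/-!
Counting the walks `v - u - w` of length two from `v` into the cell `j` in two ways gives
`(S²) (C v) j = n • [C v = j] + 2 • #{w ∈ C_j | d(v, w) = 2}`, because two words of the cube
have `n`, `2` or `0` common neighbours according as they are equal, at distance 2, or neither.
So the number of words of `C_j` at distance 2 from `v` is `((S² - n I) / 2) (C v) j`, and since
a word at distance 2 from an even word is even, this is the quotient matrix of the restriction
to the halved cube.
-/

namespace IsEquitableK

variable {α : Type*} [Fintype α] {G : SimpleGraph α} [DecidableRel G.Adj] {k : ℕ}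
  {C : α → Fin k} {S : Fin k → Fin k → ℕ}

theorem sum_card_commonNeighbors (hC : IsEquitableK G C S) (v : α) (j : Fin k) :
    ∑ w with C w = j, #{u | G.Adj v u ∧ G.Adj u w} = ∑ l, S (C v) l * S l j := by
  have hcount := sum_card_bipartiteAbove_eq_sum_card_bipartiteBelow G.Adj
    (s := {u | G.Adj v u}) (t := {w | C w = j})
  simp only [bipartiteAbove, bipartiteBelow, filter_filter] at hcount
  calc ∑ w with C w = j, #{u | G.Adj v u ∧ G.Adj u w}
      = ∑ u with G.Adj v u, #{w | C w = j ∧ G.Adj u w} := hcount.symm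
    _ = ∑ u with G.Adj v u, S (C u) j := by
        refine sum_congr rfl fun u _ => ?_
        rw [← hC u j]; simp only [and_comm]
    _ = ∑ l, ∑ u with G.Adj v u ∧ C u = l, S (C u) j := by
        rw [← sum_fiberwise _ C]; simp only [filter_filter]
    _ = ∑ l, S (C v) l * S l j := by
        refine sum_congr rfl fun l _ => ?_
        rw [sum_congr rfl fun u hu => by rw [(mem_filter.1 hu).2.2], sum_const, smul_eq_mul, hC v l]

end IsEquitableK

section Cube

variable {ι : Type*} [Fintype ι] [DecidableEq ι]

lemma ZMod.two_ne_iff_eq_add_one (a b : ZMod 2) : a ≠ b ↔ b = a + 1 := by decide +revert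

theorem hammingDist_add_single_of_eq {v w : ι → ZMod 2} {i : ι} (h : v i = w i) :
    hammingDist (v + Pi.single i 1) w = hammingDist v w + 1 := by
  rw [hammingDist, hammingDist,
    ← card_insert_of_notMem (s := {j | v j ≠ w j}) (a := i) (by simp [h])]
  congr 1
  ext j
  rcases eq_or_ne j i with rfl | hji <;> simp [*]

theorem hammingDist_add_single_of_ne {v w : ι → ZMod 2} {i : ι} (h : v i ≠ w i) :
    hammingDist (v + Pi.single i 1) w + 1 = hammingDist v w := by
  rw [hammingDist, hammingDist,
    ← card_erase_add_one (s := {j | v j ≠ w j}) (a := i) (by simp [h])]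
  congr 2
  ext j
  rcases eq_or_ne j i with rfl | hji <;> simp [*, (ZMod.two_ne_iff_eq_add_one _ _).1 h]

theorem cube_adj_iff {v u : ι → ZMod 2} :
    (cube ι).Adj v u ↔ ∃ i, u = v + Pi.single i 1 := by
  constructor
  · intro h
    obtain ⟨i, hi⟩ := card_eq_one.1 h
    refine ⟨i, funext fun j => ?_⟩
    have hj := congrArg (j ∈ ·) hi
    rcases eq_or_ne j i with rfl | hji
    · simpa [ZMod.two_ne_iff_eq_add_one] using hj
    · simpa [hji, eq_comm] using hj
  · rintro ⟨i, rfl⟩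
    show hammingDist v (v + Pi.single i 1) = 1
    rw [hammingDist_comm, hammingDist_add_single_of_eq rfl, hammingDist_self]

theorem card_cube_adj_filter (v : ι → ZMod 2) (P : (ι → ZMod 2) → Prop) [DecidablePred P] :
    #{u | (cube ι).Adj v u ∧ P u} = #{i | P (v + Pi.single i 1)} := by
  have hinj : Function.Injective fun i : ι => v + Pi.single i (1 : ZMod 2) := fun i j h => by
    by_contra hij
    simpa [Pi.single_apply, hij] using congrFun h i
  rw [← card_image_of_injective _ hinj]
  congr 1
  ext u
  simp only [mem_filter, mem_univ, true_and, mem_image, cube_adj_iff]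
  constructor
  · rintro ⟨⟨i, rfl⟩, hP⟩
    exact ⟨i, hP, rfl⟩
  · rintro ⟨i, hP, rfl⟩
    exact ⟨⟨i, rfl⟩, hP⟩

theorem card_cube_commonNeighbors (v w : ι → ZMod 2) :
    #{u | (cube ι).Adj v u ∧ (cube ι).Adj u w} =
      if w = v then Fintype.card ι else if hammingDist v w = 2 then 2 else 0 := by
  rw [card_cube_adj_filter v ((cube ι).Adj · w)]
  split_ifs with hwv hvw
  · subst hwv
    simp [cube, hammingDist_add_single_of_eq, hammingDist_self]
  · refine Eq.trans (congrArg card (filter_congr fun i _ => ?_)) hvw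
    change hammingDist _ w = 1 ↔ v i ≠ w i
    by_cases hi : v i = w i
    · simp [hi, hammingDist_add_single_of_eq hi, hvw]
    · have := hammingDist_add_single_of_ne hi
      simp only [hi, ne_eq, not_false_eq_true, iff_true]
      omega
  · rw [card_eq_zero, filter_eq_empty_iff]
    intro i _ hadj
    change hammingDist _ w = 1 at hadj
    by_cases hi : v i = w i
    · rw [hammingDist_add_single_of_eq hi] at hadj
      exact hwv (eq_of_hammingDist_eq_zero (by omega)).symm
    · have := hammingDist_add_single_of_ne hi
      omega

theorem IsEquitableK.two_mul_card_hammingDist_eq_two_add {k : ℕ} {C : (ι → ZMod 2) → Fin k}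
    {S : Fin k → Fin k → ℕ} (hC : IsEquitableK (cube ι) C S) (v : ι → ZMod 2)
    (j : Fin k) :
    2 * #{w | hammingDist v w = 2 ∧ C w = j} + (if C v = j then Fintype.card ι else 0) =
      ∑ l, S (C v) l * S l j := by
  have hsplit : ∀ w : ι → ZMod 2,
      (if w = v then Fintype.card ι else if hammingDist v w = 2 then 2 else 0) =
        (if hammingDist v w = 2 then 2 else 0) + (if w = v then Fintype.card ι else 0) := by
    intro w
    rcases eq_or_ne w v with rfl | hwv <;> simp [*]
  rw [← hC.sum_card_commonNeighbors v j]
  simp only [card_cube_commonNeighbors, hsplit, sum_add_distrib, sum_ite_eq', mem_filter,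
    mem_univ, true_and, ← sum_filter, filter_filter, sum_const, smul_eq_mul]
  rw [mul_comm]
  simp only [and_comm]

end Cube

section HalvedCube

variable {ι : Type*} [Fintype ι]

theorem natCast_hammingDist_zmod_two (x y : ι → ZMod 2) :
    (hammingDist x y : ZMod 2) = ∑ i, (x i - y i) := by
  rw [hammingDist, card_filter]
  push_cast
  refine sum_congr rfl fun i _ => ?_
  generalize x i = a, y i = b
  decide +revert

theorem even_hammingDist_trans {x y z : ι → ZMod 2} (hxy : Even (hammingDist x y))
    (hyz : Even (hammingDist y z)) : Even (hammingDist x z) := by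
  rw [← ZMod.natCast_eq_zero_iff_even, natCast_hammingDist_zmod_two] at *
  calc ∑ i, (x i - z i) = ∑ i, (x i - y i) + ∑ i, (y i - z i) := by
        rw [← sum_add_distrib]; simp
    _ = 0 := by rw [hxy, hyz, add_zero]

theorem card_halvedCube_adj_filter [DecidableEq ι]
    (v : {x : ι → ZMod 2 // Even (hammingDist x 0)})
    (P : (ι → ZMod 2) → Prop) [DecidablePred P] :
    #{w | (halvedCube ι).Adj v w ∧ P w.1} = #{w | hammingDist v.1 w = 2 ∧ P w} := by
  refine card_bij (fun w _ => w.1)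
    (fun w hw => by rw [mem_filter] at hw ⊢; exact ⟨mem_univ _, hw.2⟩)
    (fun _ _ _ _ => Subtype.ext) fun w hw => ?_
  obtain ⟨hvw, hP⟩ := (mem_filter.1 hw).2
  have hw_even : Even (hammingDist w 0) := by
    refine even_hammingDist_trans ?_ v.2
    rw [hammingDist_comm, hvw]
    exact even_two
  exact ⟨⟨w, hw_even⟩, by rw [mem_filter]; exact ⟨mem_univ _, hvw, hP⟩, rfl⟩

end HalvedCube

theorem stmt8_general (n k : ℕ) (C : (Fin n → ZMod 2) → Fin k) (S : Fin k → Fin k → ℕ)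
    (hC : IsEquitableK (cube (Fin n)) C S) :
    ∃ S' : Fin k → Fin k → ℕ,
      IsEquitableK (halvedCube (Fin n)) (fun v => C v.1) S' := by
  refine ⟨fun i j => (∑ l, S i l * S l j - if i = j then n else 0) / 2, fun v j => ?_⟩
  have hcount := hC.two_mul_card_hammingDist_eq_two_add v.1 j
  rw [Fintype.card_fin] at hcount
  rw [card_halvedCube_adj_filter v (C · = j)]
  dsimp only
  split_ifs at hcount ⊢ <;> omega

/-- the restriction of an equitable `k`-partition of the
hypercube `H(n)` to the even-weight words is an equitable `k`-partition of the
halved `n`-cube (provided all restricted cells are nonempty). -/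
theorem stmt8 (n k : ℕ) (C : (Fin n → ZMod 2) → Fin k) (S : Fin k → Fin k → ℕ)
    (hC : IsEquitableK (cube (Fin n)) C S)
    (hne : ∀ i : Fin k, ∃ v : {x : Fin n → ZMod 2 // Even (hammingDist x 0)}, C v.1 = i) :
    ∃ S' : Fin k → Fin k → ℕ,
      IsEquitableK (halvedCube (Fin n)) (fun v => C v.1) S' :=
  stmt8_general n k C S hC
end

section
/- Let C = (C₀,…,C_{k−1}) be an equitable k-partition of the halved n-cube with quotient matrix S. Define C^{(t)} on the halved tn-cube by C^{(t)}(x̄₁,…,x̄_t) = C(x̄₁ + ⋯ + x̄_t) (where x̄ᵢ are length-n blocks and the total weight of the tn-word is even, hence the sum has even weight). Then C^{(t)} is an equitable k-partition of the halved tn-cube with quotient matrix S^{(t)} = t²S + n·(t(t−1)/2)·Id. -/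
open Finset

variable {V : Type*} [Fintype V] [DecidableEq V]

/-!
A neighbour of a vertex `v` of the halved `(τ × ι)`-cube is `v + e_p + e_q` for two distinct
positions `p, q`, and the block sum sends it to `blockSum v + e_{p.2} + e_{q.2}`. When the
columns `p.2, q.2` differ this is a neighbour of `blockSum v`, reached from `|τ|²` pairs;
when they agree it is `blockSum v` itself, reached from `|ι| · C(|τ|, 2)` pairs. Counting
ordered pairs doubles both sides and avoids unordered pairs altogether.
-/

lemma zmod_two_eq_of_ne_zero_iff {a b : ZMod 2} (h : a ≠ 0 ↔ b ≠ 0) : a = b := by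
  revert a b
  decide

lemma even_hammingDist_zero_iff {ι : Type*} [Fintype ι] (x : ι → ZMod 2) :
    Even (hammingDist x 0) ↔ ∑ i, x i = 0 := by
  have hsum : ∑ i, x i = (hammingNorm x : ZMod 2) := by
    rw [← sum_filter_ne_zero, hammingNorm, card_eq_sum_ones, Nat.cast_sum]
    exact sum_congr rfl fun i hi => by
      rw [Nat.cast_one]
      exact zmod_two_eq_of_ne_zero_iff (iff_of_true (mem_filter.mp hi).2 one_ne_zero)
  rw [hsum, hammingDist_zero_right, ZMod.natCast_eq_zero_iff_even]

lemma sum_offDiag_prod_snd {τ ι M : Type*} [Fintype τ] [Fintype ι] [DecidableEq τ]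
    [DecidableEq ι] [AddCommMonoid M] (F : ι → ι → M) :
    ∑ pq ∈ (univ : Finset (τ × ι)).offDiag, F pq.1.2 pq.2.2 =
      Fintype.card τ ^ 2 • ∑ cd ∈ (univ : Finset ι).offDiag, F cd.1 cd.2 +
        (Fintype.card τ * (Fintype.card τ - 1)) • ∑ c, F c c := by
  rw [← sum_filter_not_add_sum_filter _ (fun pq => pq.1.2 = pq.2.2)]
  congr 1
  · rw [sum_nbij' (fun pq => ((pq.1.2, pq.2.2), (pq.1.1, pq.2.1)))
      (fun x => ((x.2.1, x.1.1), (x.2.2, x.1.2)))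
      (t := (univ : Finset ι).offDiag ×ˢ (univ : Finset (τ × τ)))
      (g := fun x => F x.1.1 x.1.2)
      (by aesop) (by aesop) (by simp) (by simp) (by simp), sum_product, smul_sum]
    simp [sq]
  · rw [sum_nbij' (fun pq => (pq.1.2, (pq.1.1, pq.2.1)))
      (fun x => ((x.2.1, x.1), (x.2.2, x.1)))
      (t := (univ : Finset ι) ×ˢ (univ : Finset τ).offDiag) (g := fun x => F x.1 x.1)
      (by aesop) (by aesop) (by simp) (by simp) (by aesop), sum_product, smul_sum]
    simp [offDiag_card, Nat.mul_sub_one]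

section PairWord
variable {ι : Type*} [DecidableEq ι]

def pairWord (p q : ι) : ι → ZMod 2 := Pi.single p 1 + Pi.single q 1

@[simp] lemma pairWord_self (p : ι) : pairWord p p = 0 := by
  ext r; simp [pairWord, Pi.single_apply]; split_ifs <;> decide

lemma pairWord_ne_zero_iff {p q : ι} (hpq : p ≠ q) (r : ι) :
    pairWord p q r ≠ 0 ↔ r = p ∨ r = q := by
  by_cases hp : r = p <;> by_cases hq : r = q <;> subst_vars <;> simp_all [pairWord]

lemma pairWord_inj {a b p q : ι} (hab : a ≠ b) (hpq : p ≠ q) :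
    pairWord a b = pairWord p q ↔ (a = p ∧ b = q) ∨ (a = q ∧ b = p) := by
  constructor
  · intro h
    have key : ∀ r, r = a ∨ r = b ↔ r = p ∨ r = q := fun r => by
      rw [← pairWord_ne_zero_iff hab, ← pairWord_ne_zero_iff hpq, h]
    have := key a; have := key b; have := key p; have := key q
    grind
  · rintro (⟨rfl, rfl⟩ | ⟨rfl, rfl⟩)
    · rfl
    · exact add_comm _ _

variable [Fintype ι]

lemma sum_pairWord (p q : ι) : ∑ r, pairWord p q r = 0 := by
  simp [pairWord, sum_add_distrib]; decide

lemma hammingNorm_pairWord {p q : ι} (hpq : p ≠ q) : hammingNorm (pairWord p q) = 2 := by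
  rw [hammingNorm, filter_congr fun r _ => pairWord_ne_zero_iff hpq r]
  convert card_pair hpq
  ext; simp

lemma exists_eq_pairWord_of_hammingNorm_eq_two {x : ι → ZMod 2} (h : hammingNorm x = 2) :
    ∃ p q, p ≠ q ∧ x = pairWord p q := by
  obtain ⟨p, q, hpq, hsupp⟩ := card_eq_two.mp h
  refine ⟨p, q, hpq, funext fun r => zmod_two_eq_of_ne_zero_iff ?_⟩
  simpa [pairWord_ne_zero_iff hpq] using Finset.ext_iff.mp hsupp r

end PairWord

section BlockSum
variable {τ ι : Type*} [Fintype τ]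

def blockSum (x : τ × ι → ZMod 2) : ι → ZMod 2 :=
  fun c => ∑ i, x (i, c)

lemma blockSum_add (x y : τ × ι → ZMod 2) : blockSum (x + y) = blockSum x + blockSum y := by
  ext c; simp [blockSum, sum_add_distrib]

lemma sum_blockSum [Fintype ι] (x : τ × ι → ZMod 2) : ∑ c, blockSum x c = ∑ p, x p :=
  (Fintype.sum_prod_type_right x).symm

variable [DecidableEq τ] [DecidableEq ι]

lemma blockSum_single (p : τ × ι) : blockSum (Pi.single p 1) = Pi.single p.2 1 := by
  ext c
  simp only [blockSum, Pi.single_apply, Prod.ext_iff, ite_and, sum_ite_eq', mem_univ, if_true]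

lemma blockSum_pairWord (p q : τ × ι) : blockSum (pairWord p q) = pairWord p.2 q.2 := by
  simp only [pairWord, blockSum_add, blockSum_single]

end BlockSum

namespace halvedCube

section Flip
variable {ι : Type*} [Fintype ι] [DecidableEq ι]

def flip (v : {x : ι → ZMod 2 // Even (hammingDist x 0)}) (p q : ι) :
    {x : ι → ZMod 2 // Even (hammingDist x 0)} :=
  ⟨v.1 + pairWord p q, by
    rw [even_hammingDist_zero_iff]
    simp only [Pi.add_apply, sum_add_distrib, sum_pairWord, add_zero]
    exact (even_hammingDist_zero_iff _).mp v.2⟩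

variable (v : {x : ι → ZMod 2 // Even (hammingDist x 0)})

@[simp] lemma flip_self (p : ι) : flip v p p = v :=
  Subtype.ext (by simp [flip])

lemma flip_eq_flip_iff {a b p q : ι} (hab : a ≠ b) (hpq : p ≠ q) :
    flip v a b = flip v p q ↔ (a = p ∧ b = q) ∨ (a = q ∧ b = p) := by
  simp [flip, Subtype.ext_iff, pairWord_inj hab hpq]

lemma adj_flip {p q : ι} (hpq : p ≠ q) : (halvedCube ι).Adj v (flip v p q) := by
  change hammingDist v.1 (v.1 + pairWord p q) = 2
  rw [hammingDist_eq_hammingNorm, neg_add_cancel_left, hammingNorm_pairWord hpq]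

lemma exists_flip_of_adj {w} (h : (halvedCube ι).Adj v w) :
    ∃ p q, p ≠ q ∧ w = flip v p q := by
  change hammingDist v.1 w.1 = 2 at h
  rw [hammingDist_eq_hammingNorm] at h
  obtain ⟨p, q, hpq, hw⟩ := exists_eq_pairWord_of_hammingNorm_eq_two h
  exact ⟨p, q, hpq, Subtype.ext (neg_add_eq_iff_eq_add.mp hw)⟩

/-- Each neighbour `w` of `v` arises as `flip v p q` from exactly two ordered pairs. -/
lemma two_mul_card_adj_filter (P : {x : ι → ZMod 2 // Even (hammingDist x 0)} → Prop)
    [DecidablePred P] :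
    2 * #{w | (halvedCube ι).Adj v w ∧ P w} =
      #{pq ∈ (univ : Finset ι).offDiag | P (flip v pq.1 pq.2)} := by
  have hmaps : (({pq ∈ (univ : Finset ι).offDiag | P (flip v pq.1 pq.2)} : Finset _) :
      Set (ι × ι)).MapsTo (fun pq => flip v pq.1 pq.2)
        ({w | (halvedCube ι).Adj v w ∧ P w} : Finset _) := by
    intro pq hpq
    simp only [coe_filter, Set.mem_ofPred_eq, mem_offDiag, mem_univ, true_and] at hpq ⊢
    exact ⟨adj_flip v hpq.1, hpq.2⟩
  rw [card_eq_sum_card_fiberwise hmaps, sum_const_nat fun w hw => ?_, mul_comm]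
  obtain ⟨hadj, hP⟩ := (mem_filter.mp hw).2
  obtain ⟨p, q, hpq, rfl⟩ := exists_flip_of_adj v hadj
  convert card_pair (a := (p, q)) (b := (q, p)) (by simp [hpq])
  ext ⟨a, b⟩
  simp only [mem_filter, mem_offDiag, mem_univ, true_and, mem_insert, mem_singleton,
    Prod.mk.injEq]
  constructor
  · rintro ⟨⟨hab, -⟩, h⟩
    exact (flip_eq_flip_iff v hab hpq).mp h
  · rintro (⟨rfl, rfl⟩ | ⟨rfl, rfl⟩)
    · exact ⟨⟨hpq, hP⟩, rfl⟩
    · have hswap := (flip_eq_flip_iff v hpq.symm hpq).mpr (Or.inr ⟨rfl, rfl⟩)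
      exact ⟨⟨hpq.symm, hswap ▸ hP⟩, hswap⟩

end Flip

section BlockSum
variable {τ ι : Type*} [Fintype τ] [Fintype ι]

def blockSum (v : {x : τ × ι → ZMod 2 // Even (hammingDist x 0)}) :
    {x : ι → ZMod 2 // Even (hammingDist x 0)} :=
  ⟨_root_.blockSum v.1, by
    rw [even_hammingDist_zero_iff, sum_blockSum, ← even_hammingDist_zero_iff]
    exact v.2⟩

variable [DecidableEq τ] [DecidableEq ι] (v : {x : τ × ι → ZMod 2 // Even (hammingDist x 0)})

lemma blockSum_flip (p q : τ × ι) : blockSum (flip v p q) = flip (blockSum v) p.2 q.2 :=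
  Subtype.ext (by simp [blockSum, flip, blockSum_add, blockSum_pairWord])

lemma card_adj_filter_blockSum (P : {x : ι → ZMod 2 // Even (hammingDist x 0)} → Prop)
    [DecidablePred P] :
    #{w | (halvedCube (τ × ι)).Adj v w ∧ P (blockSum w)} =
      Fintype.card τ ^ 2 * #{u | (halvedCube ι).Adj (blockSum v) u ∧ P u} +
        if P (blockSum v) then Fintype.card ι * (Fintype.card τ).choose 2 else 0 := by
  apply Nat.eq_of_mul_eq_mul_left two_pos
  have hchoose : Fintype.card τ * (Fintype.card τ - 1) = 2 * (Fintype.card τ).choose 2 := by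
    rw [Nat.choose_two_right, Nat.two_mul_div_two_of_even (Nat.even_mul_pred_self _)]
  calc 2 * #{w | (halvedCube (τ × ι)).Adj v w ∧ P (blockSum w)}
      = ∑ pq ∈ (univ : Finset (τ × ι)).offDiag,
          if P (flip (blockSum v) pq.1.2 pq.2.2) then 1 else 0 := by
        rw [two_mul_card_adj_filter v (fun w => P (blockSum w)), card_filter]
        simp only [blockSum_flip]
    _ = Fintype.card τ ^ 2 * (2 * #{u | (halvedCube ι).Adj (blockSum v) u ∧ P u}) +
          Fintype.card τ * (Fintype.card τ - 1) *
            (if P (blockSum v) then Fintype.card ι else 0) := by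
        rw [sum_offDiag_prod_snd (fun c d => if P (flip (blockSum v) c d) then 1 else 0),
          two_mul_card_adj_filter, card_filter]
        simp [sum_boole]
    _ = 2 * (Fintype.card τ ^ 2 * #{u | (halvedCube ι).Adj (blockSum v) u ∧ P u} +
          if P (blockSum v) then Fintype.card ι * (Fintype.card τ).choose 2 else 0) := by
        rw [hchoose]
        split_ifs <;> ring

end BlockSum

end halvedCube

/-- the `×t` construction for the halved cube. If `C` is an
equitable `k`-partition of the halved `n`-cube with quotient matrix `S`, then
`C^{(t)}(x̄₁,…,x̄_t) = C(x̄₁ + ⋯ + x̄_t)` is an equitable `k`-partition of the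
halved `tn`-cube with quotient matrix `S^{(t)} = t²·S + n·(t(t-1)/2)·Id`. -/
theorem stmt12 (n k t : ℕ)
    (C : {x : Fin n → ZMod 2 // Even (hammingDist x 0)} → Fin k)
    (S : Fin k → Fin k → ℕ)
    (hC : IsEquitableK (halvedCube (Fin n)) C S)
    (D : {x : Fin t × Fin n → ZMod 2 // Even (hammingDist x 0)} → Fin k)
    (hD : ∀ v, ∃ h : Even (hammingDist (fun j => ∑ i : Fin t, v.1 (i, j)) 0),
      D v = C ⟨fun j => ∑ i : Fin t, v.1 (i, j), h⟩) :
    IsEquitableK (halvedCube (Fin t × Fin n)) D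
      (fun i j => t ^ 2 * S i j + if i = j then n * (t * (t - 1) / 2) else 0) := by
  intro v j
  have hD' : ∀ w, D w = C (halvedCube.blockSum w) := fun w => (hD w).choose_spec
  simp only [hD']
  rw [halvedCube.card_adj_filter_blockSum v (C · = j), hC, Fintype.card_fin, Fintype.card_fin,
    Nat.choose_two_right]
end
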